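/- Let S₁, S₂ ⊆ ℕ be finite nonempty sets that are collision-free, meaning the map S₁ × S₂ → ℕ, (s₁, s₂) ↦ s₁ + s₂, is injective (equivalently |S₁ + S₂| = |S₁|·|S₂|). Then z_{S₁+S₂} ≤ z_{S₁} + z_{S₂}, where S₁ + S₂ = {s₁ + s₂ : s₁ ∈ S₁, s₂ ∈ S₂} is the sumset. -/

import Mathlib

open Real Finset

/-- `g_S(t) = ∑_{e ∈ S} t^(2e)`. -/
noncomputable def gS (S : Finset ℕ) (t : ℝ) : ℝ := ∑ e ∈ S, t ^ (2 * e)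

/-- `h_S(t) = ∑_{e ∈ S} e² t^(2e-2)` (the term for `e = 0` being `0`). -/
noncomputable def hS (S : Finset ℕ) (t : ℝ) : ℝ := ∑ e ∈ S, (e : ℝ) ^ 2 * t ^ (2 * e - 2)

/-- `q_S(t) = ∑_{e ∈ S} e t^(2e-1)` (the term for `e = 0` being `0`). -/
noncomputable def qS (S : Finset ℕ) (t : ℝ) : ℝ := ∑ e ∈ S, (e : ℝ) * t ^ (2 * e - 1)

/-- `E_S(t) = g_S(t) h_S(t) - q_S(t)²`. -/
noncomputable def ES (S : Finset ℕ) (t : ℝ) : ℝ := gS S t * hS S t - qS S t ^ 2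

/-- The expected number of real zeros in `(0,1)`, given by the Edelman–Kostlan integral. -/
noncomputable def zS (S : Finset ℕ) : ℝ :=
  (1 / Real.pi) * ∫ t in (0 : ℝ)..1, Real.sqrt (ES S t) / gS S t


/-!
With `u_e = t^e` and `v_e = e t^(e-1) = u_e'` one has `g = ∑ u²`, `h = ∑ v²`, `q = ∑ u v`, so
`E = g h - q²` is a Cauchy–Schwarz defect and is nonnegative. If `S₁ + S₂` is collision-free,
`u_(a+b) = u_a u_b` and `v_(a+b) = v_a u_b + u_a v_b` give `E_(S₁+S₂) = g₂² E₁ + g₁² E₂`, so the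
integrand `ρ = √E / g` satisfies `ρ_(S₁+S₂)² = ρ_(S₁)² + ρ_(S₂)²`, whence
`ρ_(S₁+S₂) ≤ ρ_(S₁) + ρ_(S₂)` pointwise. For integrability: `ρ_{m} = 0`, so `ρ` does not change
when `S` is translated to contain `0`, and then `g ≥ 1` makes `ρ` continuous.
-/

open Pointwise MeasureTheory

lemma Finset.sum_add_eq_sum_sum {α M : Type*} [DecidableEq α] [Add α] [AddCommMonoid M]
    {s t : Finset α} (hst : (s ×ˢ t : Set (α × α)).InjOn fun p => p.1 + p.2) (f : α → M) :
    ∑ e ∈ s + t, f e = ∑ a ∈ s, ∑ b ∈ t, f (a + b) := by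
  rw [add_def, sum_image (by simpa using hst), sum_product]

section Gram

variable (S : Finset ℕ) (t : ℝ)

lemma gS_eq_sum_sq : gS S t = ∑ e ∈ S, (t ^ e) ^ 2 :=
  sum_congr rfl fun e _ => pow_mul' t 2 e

lemma hS_eq_sum_sq : hS S t = ∑ e ∈ S, ((e : ℝ) * t ^ (e - 1)) ^ 2 :=
  sum_congr rfl fun e _ => by rw [mul_pow, ← pow_mul, Nat.sub_mul]; ring_nf

lemma qS_eq_sum_mul : qS S t = ∑ e ∈ S, t ^ e * ((e : ℝ) * t ^ (e - 1)) := by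
  refine sum_congr rfl fun e _ => ?_
  rcases e with _ | e
  · simp
  · rw [mul_left_comm, ← pow_add]; congr 2; omega

lemma ES_nonneg : 0 ≤ ES S t := by
  rw [ES, gS_eq_sum_sq, hS_eq_sum_sq, qS_eq_sum_mul, sub_nonneg]
  exact sum_mul_sq_le_sq_mul_sq S _ _

lemma gS_nonneg : 0 ≤ gS S t := by
  rw [gS_eq_sum_sq]; positivity

lemma gS_pos {S : Finset ℕ} (hS : S.Nonempty) {t : ℝ} (ht : t ≠ 0) : 0 < gS S t := by
  rw [gS_eq_sum_sq]; exact sum_pos (fun e _ => by positivity) hS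

lemma one_le_gS {S : Finset ℕ} (hS : 0 ∈ S) (t : ℝ) : 1 ≤ gS S t := by
  rw [gS_eq_sum_sq]
  simpa using single_le_sum (f := fun e => (t ^ e) ^ 2) (fun e _ => sq_nonneg _) hS

lemma ES_singleton (m : ℕ) : ES {m} t = 0 := by
  rw [ES, gS_eq_sum_sq, hS_eq_sum_sq, qS_eq_sum_mul]; simp only [sum_singleton]; ring

lemma continuous_gS : Continuous (gS S) := by
  unfold gS; fun_prop

lemma continuous_ES : Continuous (ES S) := by
  unfold ES gS hS qS; fun_prop

end Gram

noncomputable def ekIntegrand (S : Finset ℕ) (t : ℝ) : ℝ := √(ES S t) / gS S t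

lemma zS_eq (S : Finset ℕ) : zS S = 1 / π * ∫ t in (0 : ℝ)..1, ekIntegrand S t := rfl

lemma ekIntegrand_nonneg (S : Finset ℕ) (t : ℝ) : 0 ≤ ekIntegrand S t :=
  div_nonneg (sqrt_nonneg _) (gS_nonneg S t)

lemma ekIntegrand_sq (S : Finset ℕ) (t : ℝ) : ekIntegrand S t ^ 2 = ES S t / gS S t ^ 2 := by
  rw [ekIntegrand, div_pow, sq_sqrt (ES_nonneg S t)]

lemma ekIntegrand_singleton (m : ℕ) (t : ℝ) : ekIntegrand {m} t = 0 := by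
  simp [ekIntegrand, ES_singleton]

lemma natCast_mul_pow_sub_one_add (t : ℝ) (a b : ℕ) :
    ((a + b : ℕ) : ℝ) * t ^ (a + b - 1)
      = (a : ℝ) * t ^ (a - 1) * t ^ b + t ^ a * ((b : ℝ) * t ^ (b - 1)) := by
  rcases a with _ | a
  · simp
  rcases b with _ | b
  · simp
  rw [show a + 1 + (b + 1) - 1 = a + b + 1 by omega]
  simp only [add_tsub_cancel_right, pow_succ, pow_add]
  push_cast
  ring

section SumSet

variable {S₁ S₂ : Finset ℕ} (hinj : (S₁ ×ˢ S₂ : Set (ℕ × ℕ)).InjOn fun p => p.1 + p.2) (t : ℝ)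
include hinj

lemma gS_add : gS (S₁ + S₂) t = gS S₁ t * gS S₂ t := by
  simp only [gS_eq_sum_sq, sum_add_eq_sum_sum hinj, sum_mul_sum, pow_add, mul_pow]

lemma qS_add : qS (S₁ + S₂) t = qS S₁ t * gS S₂ t + gS S₁ t * qS S₂ t := by
  simp only [gS_eq_sum_sq, qS_eq_sum_mul, sum_add_eq_sum_sum hinj, sum_mul_sum,
    ← sum_add_distrib, natCast_mul_pow_sub_one_add, pow_add]
  exact sum_congr rfl fun a _ => sum_congr rfl fun b _ => by ring

lemma hS_add :
    hS (S₁ + S₂) t = hS S₁ t * gS S₂ t + gS S₁ t * hS S₂ t + 2 * qS S₁ t * qS S₂ t := by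
  simp only [gS_eq_sum_sq, hS_eq_sum_sq, qS_eq_sum_mul, sum_add_eq_sum_sum hinj,
    natCast_mul_pow_sub_one_add]
  rw [mul_assoc 2, sum_mul_sum, sum_mul_sum, sum_mul_sum]
  simp only [mul_sum, ← sum_add_distrib]
  exact sum_congr rfl fun a _ => sum_congr rfl fun b _ => by ring

lemma ES_add : ES (S₁ + S₂) t = gS S₂ t ^ 2 * ES S₁ t + gS S₁ t ^ 2 * ES S₂ t := by
  simp only [ES, gS_add hinj, qS_add hinj, hS_add hinj]; ring

lemma ekIntegrand_add (h₁ : gS S₁ t ≠ 0) (h₂ : gS S₂ t ≠ 0) :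
    ekIntegrand (S₁ + S₂) t = √(ekIntegrand S₁ t ^ 2 + ekIntegrand S₂ t ^ 2) := by
  rw [← sqrt_sq (ekIntegrand_nonneg _ t), ekIntegrand_sq, ekIntegrand_sq, ekIntegrand_sq,
    ES_add hinj, gS_add hinj]
  congr 1
  field_simp

lemma ekIntegrand_add_le : ekIntegrand (S₁ + S₂) t ≤ ekIntegrand S₁ t + ekIntegrand S₂ t := by
  have h₁ := ekIntegrand_nonneg S₁ t
  have h₂ := ekIntegrand_nonneg S₂ t
  by_cases hg : gS S₁ t = 0 ∨ gS S₂ t = 0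
  -- then `gS (S₁ + S₂) t = 0` and the left side is the junk value `x / 0 = 0`
  · have : gS (S₁ + S₂) t = 0 := by rw [gS_add hinj]; exact mul_eq_zero.2 hg
    simp only [ekIntegrand, this, div_zero]
    positivity
  push Not at hg
  rw [ekIntegrand_add hinj t hg.1 hg.2, sqrt_le_left (by positivity)]
  nlinarith

end SumSet

lemma exists_singleton_add_eq (S : Finset ℕ) (hS : S.Nonempty) :
    ∃ m T, 0 ∈ T ∧ {m} + T = S := by
  refine ⟨S.min' hS, S.image (· - S.min' hS), mem_image.2 ⟨_, S.min'_mem hS, Nat.sub_self _⟩, ?_⟩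
  rw [singleton_add, ← image_vadd, image_image]
  exact (image_congr fun e he => by simp [Nat.add_sub_cancel' (S.min'_le e he)]).trans image_id

lemma continuous_ekIntegrand {S : Finset ℕ} (hS : 0 ∈ S) : Continuous (ekIntegrand S) :=
  (continuous_ES S).sqrt.div (continuous_gS S) fun t => (one_pos.trans_le (one_le_gS hS t)).ne'

lemma intervalIntegrable_ekIntegrand (S : Finset ℕ) (a b : ℝ) :
    IntervalIntegrable (ekIntegrand S) volume a b := by
  rcases S.eq_empty_or_nonempty with rfl | hS
  · have : ekIntegrand ∅ = fun _ => 0 := by ext; simp [ekIntegrand, gS]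
    exact this ▸ intervalIntegrable_const
  obtain ⟨m, T, hT, rfl⟩ := exists_singleton_add_eq S hS
  have hinj : (({m} : Finset ℕ) ×ˢ T : Set (ℕ × ℕ)).InjOn fun p => p.1 + p.2 := by
    intro p hp q hq h
    simp_all [Prod.ext_iff]
  refine ((continuous_ekIntegrand hT).intervalIntegrable a b).congr_ae (ae_restrict_of_ae ?_)
  filter_upwards [Measure.ae_ne volume 0] with t ht
  rw [ekIntegrand_add hinj t (gS_pos (singleton_nonempty m) ht).ne' (gS_pos ⟨0, hT⟩ ht).ne',
    ekIntegrand_singleton, sq, zero_mul, zero_add, sqrt_sq (ekIntegrand_nonneg T t)]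

open Pointwise in
theorem stmt7_general (S₁ S₂ : Finset ℕ)
    (hcf : ∀ a ∈ S₁, ∀ b ∈ S₂, ∀ a' ∈ S₁, ∀ b' ∈ S₂, a + b = a' + b' → a = a' ∧ b = b') :
    zS (S₁ + S₂) ≤ zS S₁ + zS S₂ := by
  have hinj : (S₁ ×ˢ S₂ : Set (ℕ × ℕ)).InjOn fun p => p.1 + p.2 := fun p hp q hq h =>
    Prod.ext_iff.2 (hcf _ hp.1 _ hp.2 _ hq.1 _ hq.2 h)
  have hint := intervalIntegrable_ekIntegrand
  rw [zS_eq, zS_eq, zS_eq, ← mul_add, ← intervalIntegral.integral_add (hint S₁ 0 1) (hint S₂ 0 1)]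
  gcongr
  exact intervalIntegral.integral_mono zero_le_one (hint _ 0 1) ((hint S₁ 0 1).add (hint S₂ 0 1))
    fun t => ekIntegrand_add_le hinj t

open Pointwise in
theorem stmt7 (S₁ S₂ : Finset ℕ) (h₁ : S₁.Nonempty) (h₂ : S₂.Nonempty)
    (hcf : ∀ a ∈ S₁, ∀ b ∈ S₂, ∀ a' ∈ S₁, ∀ b' ∈ S₂, a + b = a' + b' → a = a' ∧ b = b') :
    zS (S₁ + S₂) ≤ zS S₁ + zS S₂ :=
  stmt7_general S₁ S₂ hcf
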